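/- arXiv:2406.13969 — 2 statements merged into one kernel-verified Lean document; each statement's English description precedes it below -/
import Mathlib

section
/- Let L ≥ 2 and let O = {(p_t, y_t)}_{t=1}^T be a dataset. Then O satisfies WARP if and only if there exists a preference function r : ℝ^L_+ × ℝ^L_+ → ℝ that is continuous, strictly increasing, skew-symmetric, and strictly piecewise concave, and that strictly rationalizes O. -/
open scoped BigOperators

noncomputable section

/-- Dot product of two vectors in `ℝ^L`. -/
def dotp {L : ℕ} (p y : Fin L → ℝ) : ℝ := ∑ i, p i * y i

/-- Membership in the nonnegative orthant `ℝ^L_+`. -/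
def Nonneg {L : ℕ} (x : Fin L → ℝ) : Prop := ∀ i, 0 ≤ x i

/-- The dataset `{(p_t, y_t)}` satisfies the Weak Axiom of Revealed Preference. -/
def WARP {L T : ℕ} (p y : Fin T → Fin L → ℝ) : Prop :=
  ¬ ∃ s t : Fin T, y t ≠ y s ∧ dotp (p t) (y t) ≥ dotp (p t) (y s) ∧
      dotp (p s) (y s) ≥ dotp (p s) (y t)

/-- `r` is skew-symmetric on the nonnegative orthant. -/
def SkewSymmetric {L : ℕ} (r : (Fin L → ℝ) → (Fin L → ℝ) → ℝ) : Prop :=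
  ∀ x y : Fin L → ℝ, Nonneg x → Nonneg y → r x y = - r y x

/-- `r` is continuous on `X × X` where `X = ℝ^L_+`. -/
def ContinuousOnOrthant {L : ℕ} (r : (Fin L → ℝ) → (Fin L → ℝ) → ℝ) : Prop :=
  ContinuousOn (fun q : (Fin L → ℝ) × (Fin L → ℝ) => r q.1 q.2)
    {q : (Fin L → ℝ) × (Fin L → ℝ) | Nonneg q.1 ∧ Nonneg q.2}

/-- `r` is strictly increasing in its first argument on the nonnegative orthant. -/
def StrictlyIncreasingFirst {L : ℕ} (r : (Fin L → ℝ) → (Fin L → ℝ) → ℝ) : Prop :=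
  ∀ x z y : Fin L → ℝ, Nonneg x → Nonneg z → Nonneg y →
    (∀ i, z i < x i) → r z y < r x y

/-- `r` is strictly piecewise concave: it is the pointwise maximum, over a compact
family indexed by `K`, of a jointly continuous family of functions each of which is
strictly concave in the first argument. -/
def StrictPiecewiseConcave {L : ℕ} (r : (Fin L → ℝ) → (Fin L → ℝ) → ℝ) : Prop :=
  ∃ (K : Type) (_ : TopologicalSpace K) (_ : CompactSpace K) (_ : Nonempty K)
    (f : K → (Fin L → ℝ) → (Fin L → ℝ) → ℝ),
    ContinuousOn (fun q : K × (Fin L → ℝ) × (Fin L → ℝ) => f q.1 q.2.1 q.2.2)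
      {q : K × (Fin L → ℝ) × (Fin L → ℝ) | Nonneg q.2.1 ∧ Nonneg q.2.2} ∧
    (∀ (k : K) (y : Fin L → ℝ), Nonneg y →
      StrictConcaveOn ℝ {x : Fin L → ℝ | Nonneg x} (fun x => f k x y)) ∧
    (∀ x y : Fin L → ℝ, Nonneg x → Nonneg y →
      IsGreatest (Set.range fun k => f k x y) (r x y))

/-- `r` strictly rationalizes the dataset `{(p_t, y_t)}`. -/
def StrictlyRationalizes {L T : ℕ} (p y : Fin T → Fin L → ℝ)
    (r : (Fin L → ℝ) → (Fin L → ℝ) → ℝ) : Prop :=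
  ∀ (t : Fin T) (z : Fin L → ℝ), Nonneg z →
    dotp (p t) (y t) ≥ dotp (p t) z → z ≠ y t → 0 < r (y t) z

/-!
For each observation `s` take a local utility `u_s` with `u_s (y_s) = 0` that is strictly
concave and strictly increasing, with supergradient at `y_s` proportional to `p_s` (a weighted
sum of `log (1 + x_i)` plus `θ p_s ⬝ x`), so that `y_s` is its unique maximiser on the budget set
of `s`; and a convex, decreasing penalty `c_s z = κ ∑_t (p_t ⬝ y_s - p_t ⬝ z)⁺`, vanishing at `y_s`.
With `W x z = min_s (u_s x + c_s z)`, the function `r x z = W x z - W z x` is skew-symmetric and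
`r x z = max_k (W x z - u_k z - c_k x)`, a maximum of functions strictly concave in `x`.

If `z ≠ y_t` is affordable at `p_t`, then `W z y_t ≤ u_t z < 0`, while `W y_t z ≥ 0` once `θ` and
`κ` are large: a large `θ` makes `u_s (y_t) ≥ 0` whenever `y_t` is unaffordable at `p_s`, and if
`y_t ≠ y_s` is affordable at `p_s`, WARP makes `y_s` unaffordable at `p_t`, so that the penalty
`c_s z ≥ κ (p_t ⬝ y_s - p_t ⬝ y_t) > 0` compensates. The converse follows from skew-symmetry.
-/

open Filter Real

lemma mul_log_sub_log_le {a b : ℝ} (ha : 0 < a) (hb : 0 < b) :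
    a * (log b - log a) ≤ b - a :=
  calc a * (log b - log a) = a * log (b / a) := by rw [log_div hb.ne' ha.ne']
    _ ≤ a * (b / a - 1) := by gcongr; exact log_le_sub_one_of_pos (div_pos hb ha)
    _ = b - a := by field_simp

lemma mul_log_sub_log_lt {a b : ℝ} (ha : 0 < a) (hb : 0 < b) (hab : b ≠ a) :
    a * (log b - log a) < b - a :=
  calc a * (log b - log a) = a * log (b / a) := by rw [log_div hb.ne' ha.ne']
    _ < a * (b / a - 1) := by
      gcongr
      exact log_lt_sub_one_of_pos (div_pos hb ha) (by rwa [ne_eq, div_eq_one_iff_eq ha.ne'])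
    _ = b - a := by field_simp

lemma eventually_nonneg_add_mul_atTop (a : ℝ) {g : ℝ} (hg : 0 < g) :
    ∀ᶠ θ in atTop, 0 ≤ a + θ * g := by
  filter_upwards [eventually_ge_atTop (-a / g)] with θ hθ
  linarith [(div_le_iff₀ hg).1 hθ]

lemma strictConcaveOn_sum_mul_apply {ι : Type*} [Fintype ι] {s : Set ℝ} {g : ℝ → ℝ}
    (hg : StrictConcaveOn ℝ s g) {w : ι → ℝ} (hw : ∀ i, 0 < w i) :
    StrictConcaveOn ℝ {x : ι → ℝ | ∀ i, x i ∈ s} fun x => ∑ i, w i * g (x i) := by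
  refine ⟨fun x hx x' hx' a b ha hb hab i => hg.1 (hx i) (hx' i) ha hb hab,
    fun x hx x' hx' hxx' a b ha hb hab => ?_⟩
  obtain ⟨j, hj⟩ := Function.ne_iff.mp hxx'
  simp only [smul_eq_mul, Finset.mul_sum, ← Finset.sum_add_distrib, Pi.add_apply, Pi.smul_apply]
  refine Finset.sum_lt_sum (fun i _ => ?_) ⟨j, Finset.mem_univ j, ?_⟩
  · have := mul_le_mul_of_nonneg_left (hg.concaveOn.2 (hx i) (hx' i) ha.le hb.le hab) (hw i).le
    simp only [smul_eq_mul] at this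
    linarith
  · have := mul_lt_mul_of_pos_left (hg.2 (hx j) (hx' j) hj ha hb hab) (hw j)
    simp only [smul_eq_mul] at this
    linarith

lemma convexOn_finset_sum {ι E : Type*} [AddCommGroup E] [Module ℝ E] {S : Set E}
    (hS : Convex ℝ S) (t : Finset ι) {f : ι → E → ℝ} (hf : ∀ i ∈ t, ConvexOn ℝ S (f i)) :
    ConvexOn ℝ S fun x => ∑ i ∈ t, f i x := by
  induction t using Finset.cons_induction with
  | empty => simpa using convexOn_const 0 hS
  | cons i t _ ih =>
    simp only [Finset.sum_cons]
    exact (hf i (Finset.mem_cons_self i t)).add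
      (ih fun j hj => hf j (Finset.mem_cons_of_mem hj))

section MinSum

variable {ι E : Type*} [Fintype ι] [Nonempty ι]

def minSum (u c : ι → E → ℝ) (x z : E) : ℝ :=
  Finset.univ.inf' Finset.univ_nonempty fun k => u k x + c k z

def minSumSkew (u c : ι → E → ℝ) (x z : E) : ℝ := minSum u c x z - minSum u c z x

variable {u c : ι → E → ℝ}

lemma minSum_le (k : ι) (x z : E) : minSum u c x z ≤ u k x + c k z :=
  Finset.inf'_le _ (Finset.mem_univ k)

lemma le_minSum {x z : E} {a : ℝ} (h : ∀ k, a ≤ u k x + c k z) : a ≤ minSum u c x z :=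
  Finset.le_inf' _ _ fun k _ => h k

lemma exists_minSum_eq (x z : E) : ∃ k, minSum u c x z = u k x + c k z := by
  obtain ⟨k, -, hk⟩ := Finset.exists_mem_eq_inf' Finset.univ_nonempty fun k => u k x + c k z
  exact ⟨k, hk⟩

lemma minSum_lt_minSum_left {x x' z : E} (h : ∀ k, u k x < u k x') :
    minSum u c x z < minSum u c x' z := by
  obtain ⟨k, hk⟩ := exists_minSum_eq (u := u) (c := c) x' z
  calc minSum u c x z ≤ u k x + c k z := minSum_le k x z
    _ < u k x' + c k z := by linarith [h k]
    _ = minSum u c x' z := hk.symm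

lemma minSum_le_minSum_right {x z z' : E} (h : ∀ k, c k z ≤ c k z') :
    minSum u c x z ≤ minSum u c x z' :=
  le_minSum fun k => (minSum_le k x z).trans (by linarith [h k])

lemma minSumSkew_lt_minSumSkew_left {x x' z : E} (hu : ∀ k, u k x < u k x')
    (hc : ∀ k, c k x' ≤ c k x) : minSumSkew u c x z < minSumSkew u c x' z := by
  have := minSum_lt_minSum_left (c := c) (z := z) hu
  have := minSum_le_minSum_right (u := u) (x := z) hc
  unfold minSumSkew
  linarith

lemma isGreatest_minSumSkew (x z : E) :
    IsGreatest (Set.range fun k => minSum u c x z - (u k z + c k x)) (minSumSkew u c x z) := by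
  obtain ⟨k, hk⟩ := exists_minSum_eq (u := u) (c := c) z x
  refine ⟨⟨k, by rw [minSumSkew, hk]⟩, ?_⟩
  rintro _ ⟨k', rfl⟩
  have := minSum_le (u := u) (c := c) k' z x
  dsimp only [minSumSkew]
  linarith

lemma strictConcaveOn_minSum [AddCommGroup E] [Module ℝ E] {S : Set E}
    (hu : ∀ k, StrictConcaveOn ℝ S (u k)) (z : E) :
    StrictConcaveOn ℝ S fun x => minSum u c x z := by
  refine ⟨(hu (Classical.arbitrary ι)).1, fun x hx w hw hxw a b ha hb hab => ?_⟩
  obtain ⟨k, hk⟩ := exists_minSum_eq (u := u) (c := c) (a • x + b • w) z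
  have hlt := (hu k).2 hx hw hxw ha hb hab
  simp only [smul_eq_mul] at hlt ⊢
  calc a * minSum u c x z + b * minSum u c w z
      ≤ a * (u k x + c k z) + b * (u k w + c k z) := by
        gcongr <;> exact minSum_le k _ z
    _ = a * u k x + b * u k w + c k z := by linear_combination c k z * hab
    _ < u k (a • x + b • w) + c k z := by linarith
    _ = minSum u c (a • x + b • w) z := hk.symm

lemma continuousOn_minSum [TopologicalSpace E] {S : Set E} (hu : ∀ k, ContinuousOn (u k) S)
    (hc : ∀ k, ContinuousOn (c k) S) :
    ContinuousOn (fun q : E × E => minSum u c q.1 q.2) (S ×ˢ S) :=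
  ContinuousOn.finset_inf'_apply _ fun k _ =>
    ((hu k).comp continuousOn_fst fun _ hq => hq.1).add
      ((hc k).comp continuousOn_snd fun _ hq => hq.2)

end MinSum

section Orthant

variable {L : ℕ}

lemma convex_setOf_nonneg : Convex ℝ {x : Fin L → ℝ | Nonneg x} := by
  intro x hx w hw a b ha hb _ i
  simp only [Pi.add_apply, Pi.smul_apply, smul_eq_mul]
  exact add_nonneg (mul_nonneg ha (hx i)) (mul_nonneg hb (hw i))

variable {ι : Type} [Fintype ι] [Nonempty ι] {u c : ι → (Fin L → ℝ) → ℝ}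

lemma skewSymmetric_minSumSkew : SkewSymmetric (minSumSkew u c) := fun x z _ _ => by
  unfold minSumSkew
  ring

lemma continuousOnOrthant_minSumSkew (hu : ∀ k, ContinuousOn (u k) {x | Nonneg x})
    (hc : ∀ k, ContinuousOn (c k) {x | Nonneg x}) : ContinuousOnOrthant (minSumSkew u c) :=
  (continuousOn_minSum hu hc).sub
    ((continuousOn_minSum hu hc).comp continuous_swap.continuousOn fun _ hq => ⟨hq.2, hq.1⟩)

lemma strictlyIncreasingFirst_minSumSkew
    (hu : ∀ k x z, Nonneg z → (∀ i, z i < x i) → u k z < u k x)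
    (hc : ∀ k x z, (∀ i, z i ≤ x i) → c k x ≤ c k z) :
    StrictlyIncreasingFirst (minSumSkew u c) := fun _ _ _ _ hz _ hzx =>
  minSumSkew_lt_minSumSkew_left (fun k => hu k _ _ hz hzx) fun k => hc k _ _ fun i => (hzx i).le

lemma strictPiecewiseConcave_minSumSkew [TopologicalSpace ι] [DiscreteTopology ι]
    (hu : ∀ k, StrictConcaveOn ℝ {x | Nonneg x} (u k)) (hc : ∀ k, ConvexOn ℝ {x | Nonneg x} (c k))
    (hu_cont : ∀ k, ContinuousOn (u k) {x | Nonneg x})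
    (hc_cont : ∀ k, ContinuousOn (c k) {x | Nonneg x}) :
    StrictPiecewiseConcave (minSumSkew u c) := by
  refine ⟨ι, inferInstance, inferInstance, inferInstance,
    fun k x z => minSum u c x z - (u k z + c k x), ?_, fun k z _ => ?_,
    fun x z _ _ => isGreatest_minSumSkew x z⟩
  · refine continuousOn_prod_of_discrete_left.2 fun k => ?_
    exact (continuousOn_minSum hu_cont hc_cont).sub
      (((hu_cont k).comp continuousOn_snd fun _ hq => hq.2).add
        ((hc_cont k).comp continuousOn_fst fun _ hq => hq.1))
  · refine (((strictConcaveOn_minSum (c := c) hu z).sub_convexOn (hc k)).add_const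
      (-u k z)).congr fun x _ => ?_
    simp only [Pi.add_apply, Pi.sub_apply]
    ring

lemma dotp_le_dotp {q x z : Fin L → ℝ} (hq : ∀ i, 0 ≤ q i) (h : ∀ i, z i ≤ x i) :
    dotp q z ≤ dotp q x :=
  Finset.sum_le_sum fun i _ => mul_le_mul_of_nonneg_left (h i) (hq i)

lemma continuous_dotp (q : Fin L → ℝ) : Continuous (dotp q) :=
  continuous_finsetSum _ fun i _ => continuous_const.mul (continuous_apply i)

lemma one_add_pos_of_nonneg {x : Fin L → ℝ} (hx : Nonneg x) (i : Fin L) : 0 < 1 + x i := by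
  linarith [hx i]

end Orthant

section LocalUtility

variable {L : ℕ}

def logUtility (q w x : Fin L → ℝ) : ℝ :=
  ∑ i, q i * (1 + w i) * (log (1 + x i) - log (1 + w i))

def localUtility (θ : ℝ) (q w x : Fin L → ℝ) : ℝ := logUtility q w x + θ * (dotp q x - dotp q w)

variable {q w x z : Fin L → ℝ} {θ : ℝ}

lemma localUtility_self : localUtility θ q w w = 0 := by simp [localUtility, logUtility]

lemma continuousOn_logUtility : ContinuousOn (logUtility q w) {x | Nonneg x} :=
  continuousOn_finsetSum _ fun i _ => continuousOn_const.mul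
    (((continuousOn_const.add (continuous_apply i).continuousOn).log
      fun _ hx => (one_add_pos_of_nonneg hx i).ne').sub continuousOn_const)

lemma continuousOn_localUtility : ContinuousOn (localUtility θ q w) {x | Nonneg x} :=
  continuousOn_logUtility.add <| continuousOn_const.mul <|
    (continuous_dotp q).continuousOn.sub continuousOn_const

variable (hq : ∀ i, 0 < q i) (hw : Nonneg w)
include hq hw

lemma logUtility_lt_dotp_sub (hx : Nonneg x) (hxw : x ≠ w) :
    logUtility q w x < dotp q x - dotp q w := by
  obtain ⟨j, hj⟩ := Function.ne_iff.mp hxw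
  have hterm : ∀ i, q i * (1 + w i) * (log (1 + x i) - log (1 + w i))
      ≤ q i * x i - q i * w i := fun i => by
    have := mul_log_sub_log_le (one_add_pos_of_nonneg hw i) (one_add_pos_of_nonneg hx i)
    nlinarith [hq i]
  rw [dotp, dotp, ← Finset.sum_sub_distrib]
  refine Finset.sum_lt_sum (fun i _ => hterm i) ⟨j, Finset.mem_univ j, ?_⟩
  have := mul_log_sub_log_lt (one_add_pos_of_nonneg hw j) (one_add_pos_of_nonneg hx j)
    (by contrapose! hj; linarith)
  nlinarith [hq j]

lemma localUtility_neg (hθ : 0 ≤ θ) (hx : Nonneg x) (hxw : x ≠ w)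
    (hbudget : dotp q x ≤ dotp q w) : localUtility θ q w x < 0 := by
  have := logUtility_lt_dotp_sub hq hw hx hxw
  have := mul_nonpos_of_nonneg_of_nonpos hθ (sub_nonpos.2 hbudget)
  unfold localUtility
  linarith

lemma localUtility_lt_localUtility [NeZero L] (hθ : 0 ≤ θ) (hz : Nonneg z) (h : ∀ i, z i < x i) :
    localUtility θ q w z < localUtility θ q w x := by
  have hlog : logUtility q w z < logUtility q w x :=
    Finset.sum_lt_sum_of_nonempty Finset.univ_nonempty fun i _ =>
      mul_lt_mul_of_pos_left (sub_lt_sub_right (log_lt_log (one_add_pos_of_nonneg hz i)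
        (by linarith [h i])) _) (mul_pos (hq i) (one_add_pos_of_nonneg hw i))
  have hdotp := mul_le_mul_of_nonneg_left
    (sub_le_sub_right (dotp_le_dotp (fun i => (hq i).le) fun i => (h i).le) (dotp q w)) hθ
  unfold localUtility
  linarith

lemma strictConcaveOn_localUtility : StrictConcaveOn ℝ {x | Nonneg x} (localUtility θ q w) := by
  have hlog : StrictConcaveOn ℝ (Set.Ici 0) fun v : ℝ => log (1 + v) :=
    (strictConcaveOn_log_Ioi.translate_right 1).subset
      (fun v (hv : 0 ≤ v) => show 0 < 1 + v by linarith) (convex_Ici 0)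
  refine (((strictConcaveOn_sum_mul_apply hlog fun i => mul_pos (hq i)
    (one_add_pos_of_nonneg hw i)).add_concaveOn
      ((θ • dotProductBilin ℝ ℝ q).concaveOn convex_setOf_nonneg)).add_const
    (-∑ i, q i * (1 + w i) * log (1 + w i) - θ * dotp q w)).congr fun x _ => ?_
  simp only [localUtility, logUtility, Pi.add_apply, LinearMap.smul_apply,
    dotProductBilin_apply_apply, smul_eq_mul, mul_sub, Finset.sum_sub_distrib]
  rw [show q ⬝ᵥ x = dotp q x from rfl]
  ring

end LocalUtility

section Shortfall

variable {L T : ℕ} (p y : Fin T → Fin L → ℝ)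

def shortfall (κ : ℝ) (s : Fin T) (z : Fin L → ℝ) : ℝ :=
  κ * ∑ t, max 0 (dotp (p t) (y s) - dotp (p t) z)

variable {p y} {κ : ℝ}

lemma shortfall_self (s : Fin T) : shortfall p y κ s (y s) = 0 := by simp [shortfall]

lemma le_shortfall (hκ : 0 ≤ κ) (s t : Fin T) (z : Fin L → ℝ) :
    κ * max 0 (dotp (p t) (y s) - dotp (p t) z) ≤ shortfall p y κ s z :=
  mul_le_mul_of_nonneg_left
    (Finset.single_le_sum (f := fun t => max 0 (dotp (p t) (y s) - dotp (p t) z))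
      (fun _ _ => le_max_left _ _) (Finset.mem_univ t)) hκ

lemma shortfall_antitone (hp : ∀ t i, 0 ≤ p t i) (hκ : 0 ≤ κ) (s : Fin T) {x z : Fin L → ℝ}
    (h : ∀ i, z i ≤ x i) : shortfall p y κ s x ≤ shortfall p y κ s z := by
  unfold shortfall
  gcongr
  exact dotp_le_dotp (hp _) h

lemma continuous_shortfall (s : Fin T) : Continuous (shortfall p y κ s) :=
  continuous_const.mul <| continuous_finsetSum _ fun _ _ =>
    continuous_const.max <| continuous_const.sub (continuous_dotp _)

lemma convexOn_shortfall (hκ : 0 ≤ κ) (s : Fin T) {S : Set (Fin L → ℝ)} (hS : Convex ℝ S) :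
    ConvexOn ℝ S (shortfall p y κ s) := by
  refine ((convexOn_finset_sum hS Finset.univ fun t _ => (convexOn_const 0 hS).sup
    (((dotProductBilin ℝ ℝ (p t)).concaveOn hS).neg.add_const (dotp (p t) (y s)))).smul
      hκ).congr fun z _ => ?_
  simp [shortfall, dotp, dotProduct, neg_add_eq_sub]

end Shortfall

section Construction

variable {L T : ℕ} {p y : Fin T → Fin L → ℝ}

variable (p y) in
lemma eventually_localUtility_nonneg : ∀ᶠ θ in atTop, ∀ s t,
    dotp (p s) (y s) < dotp (p s) (y t) → 0 ≤ localUtility θ (p s) (y s) (y t) := by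
  refine eventually_all.2 fun s => eventually_all.2 fun t => ?_
  by_cases h : dotp (p s) (y s) < dotp (p s) (y t)
  · filter_upwards [eventually_nonneg_add_mul_atTop (logUtility (p s) (y s) (y t)) (sub_pos.2 h)]
      with θ hθ _ using hθ
  · exact Eventually.of_forall fun _ h' => absurd h' h

lemma eventually_localUtility_add_shortfall_nonneg (hW : WARP p y) {θ : ℝ}
    (hθ : ∀ s t, dotp (p s) (y s) < dotp (p s) (y t) → 0 ≤ localUtility θ (p s) (y s) (y t)) :
    ∀ᶠ κ in atTop, ∀ s t, 0 ≤ localUtility θ (p s) (y s) (y t) +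
      κ * max 0 (dotp (p t) (y s) - dotp (p t) (y t)) := by
  refine eventually_all.2 fun s => eventually_all.2 fun t => ?_
  by_cases hu : 0 ≤ localUtility θ (p s) (y s) (y t)
  · filter_upwards [eventually_ge_atTop 0] with κ hκ
    exact add_nonneg hu (mul_nonneg hκ (le_max_left _ _))
  have hne : y t ≠ y s := fun h => hu (by rw [h, localUtility_self])
  have hts : dotp (p s) (y t) ≤ dotp (p s) (y s) := not_lt.1 fun h => hu (hθ s t h)
  have hst : dotp (p t) (y t) < dotp (p t) (y s) := not_le.1 fun h => hW ⟨s, t, hne, h, hts⟩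
  exact eventually_nonneg_add_mul_atTop _ (lt_max_of_lt_right (a := 0) (sub_pos.2 hst))

lemma strictlyRationalizes_minSumSkew [NeZero T] (hp : ∀ t i, 0 < p t i) (hy : ∀ t, Nonneg (y t))
    {θ κ : ℝ} (hθ : 0 ≤ θ) (hκ : 0 ≤ κ) (hbound : ∀ s t, 0 ≤ localUtility θ (p s) (y s) (y t) +
      κ * max 0 (dotp (p t) (y s) - dotp (p t) (y t))) :
    StrictlyRationalizes p y
      (minSumSkew (fun s => localUtility θ (p s) (y s)) (shortfall p y κ)) := by
  intro t z hz hbudget hne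
  have hworse : minSum (fun s => localUtility θ (p s) (y s)) (shortfall p y κ) z (y t) < 0 :=
    calc _ ≤ localUtility θ (p t) (y t) z + shortfall p y κ t (y t) := minSum_le t z (y t)
      _ < 0 := by
        rw [shortfall_self, add_zero]
        exact localUtility_neg (hp t) (hy t) hθ hz hne hbudget
  have hshortfall : ∀ s, κ * max 0 (dotp (p t) (y s) - dotp (p t) (y t)) ≤ shortfall p y κ s z :=
    fun s => (mul_le_mul_of_nonneg_left (max_le_max le_rfl (by linarith)) hκ).trans
      (le_shortfall hκ s t z)
  have hbetter : 0 ≤ minSum (fun s => localUtility θ (p s) (y s)) (shortfall p y κ) (y t) z :=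
    le_minSum fun s => (hbound s t).trans (add_le_add_right (hshortfall s) _)
  unfold minSumSkew
  linarith

lemma warp_of_strictlyRationalizes {r : (Fin L → ℝ) → (Fin L → ℝ) → ℝ}
    (hy : ∀ t, Nonneg (y t)) (hskew : SkewSymmetric r) (hr : StrictlyRationalizes p y r) :
    WARP p y := by
  rintro ⟨s, t, hne, hts, hst⟩
  have := hr t (y s) (hy s) hts hne.symm
  have := hr s (y t) (hy t) hst hne
  linarith [hskew (y t) (y s) (hy t) (hy s)]

end Construction

/-- Lemma 1 of the paper: a dataset satisfies WARP if and only if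
it is strictly rationalized by a continuous, strictly increasing, skew-symmetric
and strictly piecewise concave preference function. -/
theorem warp_iff_strict_preference_function_rationalization
    {L T : ℕ} (hL : 2 ≤ L) (hT : 1 ≤ T)
    (p y : Fin T → Fin L → ℝ)
    (hp : ∀ t i, 0 < p t i) (hy : ∀ t, Nonneg (y t)) :
    WARP p y ↔
      ∃ r : (Fin L → ℝ) → (Fin L → ℝ) → ℝ,
        ContinuousOnOrthant r ∧ StrictlyIncreasingFirst r ∧ SkewSymmetric r ∧
        StrictPiecewiseConcave r ∧ StrictlyRationalizes p y r := by
  have : NeZero L := ⟨by omega⟩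
  have : NeZero T := ⟨by omega⟩
  refine ⟨fun hW => ?_, fun ⟨r, _, _, hskew, _, hr⟩ => warp_of_strictlyRationalizes hy hskew hr⟩
  obtain ⟨θ, hθ, hθ_large⟩ :=
    ((eventually_ge_atTop 0).and (eventually_localUtility_nonneg p y)).exists
  obtain ⟨κ, hκ, hκ_large⟩ :=
    ((eventually_ge_atTop 0).and (eventually_localUtility_add_shortfall_nonneg hW hθ_large)).exists
  have hu_cont : ∀ s, ContinuousOn (localUtility θ (p s) (y s)) {x | Nonneg x} :=
    fun _ => continuousOn_localUtility
  have hc_cont : ∀ s, ContinuousOn (shortfall p y κ s) {x | Nonneg x} :=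
    fun s => (continuous_shortfall s).continuousOn
  exact ⟨_, continuousOnOrthant_minSumSkew hu_cont hc_cont,
    strictlyIncreasingFirst_minSumSkew
      (fun s _ _ hz h => localUtility_lt_localUtility (hp s) (hy s) hθ hz h)
      (fun s _ _ h => shortfall_antitone (fun t i => (hp t i).le) hκ s h),
    skewSymmetric_minSumSkew,
    strictPiecewiseConcave_minSumSkew (fun s => strictConcaveOn_localUtility (hp s) (hy s))
      (fun s => convexOn_shortfall hκ s convex_setOf_nonneg) hu_cont hc_cont,
    strictlyRationalizes_minSumSkew hp hy hθ hκ hκ_large⟩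
end
end

section
/- Fix T ≥ 1, nonempty finite patch sets I_1,…,I_T, a nonempty finite set A of types, and a stochastic choice function ρ = (ρ_{i|t}). Then the following are equivalent: (i) there exists ν that rationalizes ρ over A; (ii) ρ satisfies the Weak Axiom of Revealed Stochastic Preference with respect to A, namely: for every function m assigning a natural number m(t,i) to each pair (t, i) with i ∈ I_t, one has Σ_{t=1}^T Σ_{i∈I_t} m(t,i)·ρ_{i|t} ≤ max_{a∈A} Σ_{t=1}^T m(t, a(t)). -/
open scoped BigOperators Classical

noncomputable section

/-- `ρ` is a stochastic choice function on the patch sets `I t`. -/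
def StochasticChoice {T : ℕ} {I : Fin T → Type*} [∀ t, Fintype (I t)]
    (ρ : ∀ t, I t → ℝ) : Prop :=
  (∀ t i, 0 ≤ ρ t i) ∧ ∀ t, ∑ i, ρ t i = 1

/-- `ν` rationalizes the stochastic choice function `ρ` over the finite set `A`
of types: `ν` is nonnegative on `A`, sums to one over `A`, and for every period
`t` and patch `i ∈ I t`, the total mass of types choosing `i` at `t` equals
`ρ_{i|t}`. -/
def Rationalizes {T : ℕ} {I : Fin T → Type*} [∀ t, Fintype (I t)]
    (A : Finset (∀ t, I t)) (ρ : ∀ t, I t → ℝ) (ν : (∀ t, I t) → ℝ) : Prop :=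
  (∀ a ∈ A, 0 ≤ ν a) ∧ (∑ a ∈ A, ν a = 1) ∧
  ∀ (t : Fin T) (i : I t), (∑ a ∈ A.filter fun a => a t = i, ν a) = ρ t i

/-!
A distribution `ν` rationalizing `ρ` is exactly a way of writing `ρ` as a convex combination of
the indicator vectors `t i ↦ [a t = i]` of the types `a ∈ A`. By separation, `ρ` lies in their
convex hull iff every real weight `w` satisfies `Σ w t i ρ t i ≤ max_{a ∈ A} Σ w t (a t)`.
Natural weights suffice: shifting `w` by a constant changes both sides by the same amount since
each `ρ t` sums to one, and rounding `N • w` up to integers costs at most `T`, which is negligible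
against `N`.
-/

section Pairing

variable {ι : Type*} {I : ι → Type*}

def typeIndicator (a : ∀ t, I t) : ∀ t, I t → ℝ :=
  fun t i => if a t = i then 1 else 0

theorem typeIndicator_injective : Function.Injective (typeIndicator (I := I)) := by
  intro a b hab
  funext t
  simpa [typeIndicator, eq_comm] using congrFun (congrFun hab t) (a t)

theorem sum_smul_typeIndicator_apply (A : Finset (∀ t, I t)) (ν : (∀ t, I t) → ℝ) (t : ι)
    (i : I t) : (∑ a ∈ A, ν a • typeIndicator a) t i = ∑ a ∈ A.filter fun a => a t = i, ν a := by
  simp [Finset.sum_apply, typeIndicator, Finset.sum_filter]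

variable [Fintype ι] [∀ t, Fintype (I t)]

def pairing (w : ∀ t, I t → ℝ) : (∀ t, I t → ℝ) →ₗ[ℝ] ℝ where
  toFun y := ∑ t, ∑ i, w t i * y t i
  map_add' y z := by simp only [Pi.add_apply, mul_add, Finset.sum_add_distrib]
  map_smul' c y := by simp [Finset.mul_sum, mul_left_comm]

theorem pairing_apply (w y : ∀ t, I t → ℝ) : pairing w y = ∑ t, ∑ i, w t i * y t i := rfl

theorem pairing_typeIndicator (w : ∀ t, I t → ℝ) (a : ∀ t, I t) :
    pairing w (typeIndicator a) = ∑ t, w t (a t) := by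
  simp [pairing_apply, typeIndicator]

theorem exists_pairing_eq (f : (∀ t, I t → ℝ) →ₗ[ℝ] ℝ) : ∃ w, ∀ y, f y = pairing w y := by
  refine ⟨fun t i => f (Pi.single t (Pi.single i 1)), fun y => ?_⟩
  have hy : y = ∑ t, ∑ i, y t i • Pi.single t (Pi.single i (1 : ℝ)) := by
    ext t i
    rw [Finset.sum_apply, Finset.sum_eq_single t (fun t' _ ht' => by simp [Pi.single_eq_of_ne' ht'])
      (by simp)]
    simp [Finset.sum_apply, Pi.single_apply]
  conv_lhs => rw [hy]
  simp [pairing_apply, map_sum, map_smul, mul_comm]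

theorem mem_convexHull_typeIndicator_iff (A : Finset (∀ t, I t)) (hA : A.Nonempty)
    (x : ∀ t, I t → ℝ) :
    x ∈ convexHull ℝ (A.image typeIndicator : Set (∀ t, I t → ℝ)) ↔
      ∀ w, pairing w x ≤ A.sup' hA fun a => ∑ t, w t (a t) := by
  constructor
  · intro hx w
    obtain ⟨_, hy, hxy⟩ := ((pairing w).convexOn convex_univ).exists_ge_of_mem_convexHull
      (Set.subset_univ _) hx
    obtain ⟨a, ha, rfl⟩ := Finset.mem_image.mp hy
    rw [pairing_typeIndicator] at hxy
    exact Finset.le_sup'_of_le _ ha hxy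
  · intro hx
    by_contra hnot
    obtain ⟨f, u, hfu, huf⟩ := geometric_hahn_banach_closed_point (convex_convexHull ℝ _)
      ((A.image typeIndicator).finite_toSet.isClosed_convexHull (𝕜 := ℝ)) hnot
    obtain ⟨w, hw⟩ := exists_pairing_eq f.toLinearMap
    have hsup : (A.sup' hA fun a => ∑ t, w t (a t)) < u := by
      refine (Finset.sup'_lt_iff hA).mpr fun a ha => ?_
      rw [← pairing_typeIndicator, ← hw]
      exact hfu _ (subset_convexHull ℝ _ (by simpa using ⟨a, ha, rfl⟩))
    linarith [hx w, hw x ▸ huf]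

end Pairing

theorem exists_rationalizes_iff_mem_convexHull {T : ℕ} {I : Fin T → Type*}
    [∀ t, Fintype (I t)] (A : Finset (∀ t, I t)) (ρ : ∀ t, I t → ℝ) :
    (∃ ν, Rationalizes A ρ ν) ↔
      ρ ∈ convexHull ℝ (A.image typeIndicator : Set (∀ t, I t → ℝ)) := by
  have hρ (ν : (∀ t, I t) → ℝ) : (∀ t i, (∑ a ∈ A.filter fun a => a t = i, ν a) = ρ t i) ↔
      ∑ a ∈ A, ν a • typeIndicator a = ρ := by
    simp only [funext_iff, sum_smul_typeIndicator_apply]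
  constructor
  · rintro ⟨ν, hν₀, hν₁, hνρ⟩
    rw [← (hρ ν).mp hνρ]
    exact (convex_convexHull ℝ _).sum_mem hν₀ hν₁ fun a ha =>
      subset_convexHull ℝ _ (Finset.mem_coe.mpr (Finset.mem_image_of_mem _ ha))
  · intro hρmem
    obtain ⟨ν, hν₀, hν₁, hνρ⟩ := Finset.mem_convexHull'.mp hρmem
    rw [Finset.sum_image fun a _ b _ h => typeIndicator_injective h] at hν₁ hνρ
    refine ⟨ν ∘ typeIndicator, fun a ha => hν₀ _ (Finset.mem_image_of_mem _ ha), hν₁, ?_⟩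
    exact (hρ _).mpr hνρ

section Integrality

variable {ι : Type*} [Fintype ι] {I : ι → Type*} [∀ t, Fintype (I t)]
  (A : Finset (∀ t, I t)) (hA : A.Nonempty) {ρ : ∀ t, I t → ℝ}

theorem pairing_le_sup'_of_forall_nat (hρ₀ : ∀ t i, 0 ≤ ρ t i)
    (h : ∀ m : ∀ t, I t → ℕ,
      pairing (fun t i => (m t i : ℝ)) ρ ≤ A.sup' hA fun a => ∑ t, (m t (a t) : ℝ))
    {w : ∀ t, I t → ℝ} (hw : ∀ t i, 0 ≤ w t i) :
    pairing w ρ ≤ A.sup' hA fun a => ∑ t, w t (a t) := by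
  set S := A.sup' hA fun a => ∑ t, w t (a t)
  have hN (N : ℕ) : N * pairing w ρ ≤ N * S + Fintype.card ι := by
    let m t i := ⌈N * w t i⌉₊
    calc N * pairing w ρ = ∑ t, ∑ i, N * w t i * ρ t i := by
          simp only [pairing_apply, Finset.mul_sum, mul_assoc]
      _ ≤ ∑ t, ∑ i, (m t i : ℝ) * ρ t i := by
          gcongr with t _ i _
          · exact hρ₀ t i
          · exact Nat.le_ceil _
      _ ≤ A.sup' hA fun a => ∑ t, (m t (a t) : ℝ) := h m
      _ ≤ N * S + Fintype.card ι := Finset.sup'_le _ _ fun a ha => calc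
          ∑ t, (m t (a t) : ℝ) ≤ ∑ t, (N * w t (a t) + 1) := by
            gcongr with t
            exact (Nat.ceil_lt_add_one (by positivity [hw t (a t)])).le
          _ = N * ∑ t, w t (a t) + Fintype.card ι := by
            simp [Finset.sum_add_distrib, Finset.mul_sum]
          _ ≤ N * S + Fintype.card ι := by
            gcongr
            exact Finset.le_sup' (fun a => ∑ t, w t (a t)) ha
  by_contra! hlt
  obtain ⟨N, hN'⟩ := exists_nat_gt (Fintype.card ι / (pairing w ρ - S))
  rw [div_lt_iff₀ (sub_pos.mpr hlt)] at hN'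
  linarith [hN N]

theorem pairing_le_sup'_of_forall_nonneg (hρ₁ : ∀ t, ∑ i, ρ t i = 1)
    (h : ∀ w : ∀ t, I t → ℝ, (∀ t i, 0 ≤ w t i) →
      pairing w ρ ≤ A.sup' hA fun a => ∑ t, w t (a t))
    (w : ∀ t, I t → ℝ) : pairing w ρ ≤ A.sup' hA fun a => ∑ t, w t (a t) := by
  obtain ⟨c, hc⟩ := Finite.exists_ge fun p : (t : ι) × I t => w p.1 p.2
  have hshift : pairing (fun t i => w t i - c) ρ = pairing w ρ - Fintype.card ι * c := by
    simp [pairing_apply, sub_mul, Finset.sum_sub_distrib, ← Finset.mul_sum, hρ₁]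
  obtain ⟨a, ha, hle⟩ := (Finset.le_sup'_iff hA).mp
    (h (fun t i => w t i - c) fun t i => sub_nonneg.mpr (hc ⟨t, i⟩))
  refine Finset.le_sup'_of_le _ ha ?_
  simp only [Finset.sum_sub_distrib, Finset.sum_const, Finset.card_univ, nsmul_eq_mul] at hle
  linarith

theorem forall_pairing_le_sup'_iff_forall_nat (hρ₀ : ∀ t i, 0 ≤ ρ t i)
    (hρ₁ : ∀ t, ∑ i, ρ t i = 1) :
    (∀ w : ∀ t, I t → ℝ, pairing w ρ ≤ A.sup' hA fun a => ∑ t, w t (a t)) ↔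
      ∀ m : ∀ t, I t → ℕ,
        pairing (fun t i => (m t i : ℝ)) ρ ≤ A.sup' hA fun a => ∑ t, (m t (a t) : ℝ) :=
  ⟨fun h _ => h _, fun h => pairing_le_sup'_of_forall_nonneg A hA hρ₁ fun _ hw =>
    pairing_le_sup'_of_forall_nat A hA hρ₀ h hw⟩

end Integrality

theorem rationalizable_iff_warsp_general
    {T : ℕ} {I : Fin T → Type*}
    [∀ t, Fintype (I t)]
    (A : Finset (∀ t, I t)) (hA : A.Nonempty)
    (ρ : ∀ t, I t → ℝ) (hρ : StochasticChoice ρ) :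
    (∃ ν : (∀ t, I t) → ℝ, Rationalizes A ρ ν) ↔
      ∀ m : (t : Fin T) → I t → ℕ,
        (∑ t, ∑ i, (m t i : ℝ) * ρ t i) ≤
          A.sup' hA (fun a => ∑ t, (m t (a t) : ℝ)) := by
  rw [exists_rationalizes_iff_mem_convexHull, mem_convexHull_typeIndicator_iff A hA,
    forall_pairing_le_sup'_iff_forall_nat A hA hρ.1 hρ.2]
  rfl

/-- a stochastic choice function is rationalizable over the set
of types `A` if and only if it satisfies the Weak Axiom of Revealed Stochastic
Preference with respect to `A`: for every multiplicity assignment `m`,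
`Σ_t Σ_i m(t,i)·ρ_{i|t} ≤ max_{a∈A} Σ_t m(t, a(t))`. -/
theorem rationalizable_iff_warsp
    {T : ℕ} (hT : 1 ≤ T) {I : Fin T → Type*}
    [∀ t, Fintype (I t)] [∀ t, Nonempty (I t)]
    (A : Finset (∀ t, I t)) (hA : A.Nonempty)
    (ρ : ∀ t, I t → ℝ) (hρ : StochasticChoice ρ) :
    (∃ ν : (∀ t, I t) → ℝ, Rationalizes A ρ ν) ↔
      ∀ m : (t : Fin T) → I t → ℕ,
        (∑ t, ∑ i, (m t i : ℝ) * ρ t i) ≤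
          A.sup' hA (fun a => ∑ t, (m t (a t) : ℝ)) :=
  rationalizable_iff_warsp_general A hA ρ hρ
end
end
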